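/- Conjunction/disjunction decomposition theorem (SCL): for any *-term P ∧◦ Q (with P a *-term and Q a P^d-form), se(P ∧◦ Q) has the unique conjunction decomposition (se(P)[T↦□], se(Q)) and has no disjunction decomposition; for any *-term P ∨◦ Q (with P a *-term and Q a P^c-form), se(P ∨◦ Q) has no conjunction decomposition and its unique disjunction decomposition is (se(P)[F↦□], se(Q)). -/
import Mathlib


/-! Shared definitions for left-sequential logics (FEL and SCL),
    evaluation trees, and decompositions. -/

/-- FEL-terms over atoms `A` (`and` = full left-sequential conjunction `∧•`,
    `or` = full left-sequential disjunction `∨•`). -/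
inductive FTerm (A : Type) : Type
  | atom : A → FTerm A
  | tru  : FTerm A
  | fls  : FTerm A
  | neg  : FTerm A → FTerm A
  | and  : FTerm A → FTerm A → FTerm A
  | or   : FTerm A → FTerm A → FTerm A

/-- SCL-terms over atoms `A` (`and` = short-circuit conjunction `∧◦`,
    `or` = short-circuit disjunction `∨◦`). -/
inductive STerm (A : Type) : Type
  | atom : A → STerm A
  | tru  : STerm A
  | fls  : STerm A
  | neg  : STerm A → STerm A
  | and  : STerm A → STerm A → STerm A
  | or   : STerm A → STerm A → STerm A

/-- Evaluation trees: finite binary trees over `A` with leaves `T`, `F`. -/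
inductive ETree (A : Type) : Type
  | tru  : ETree A
  | fls  : ETree A
  | node : ETree A → A → ETree A → ETree A

namespace ETree

/-- `X.subst Y Z = X[T↦Y, F↦Z]`. -/
def subst {A : Type} : ETree A → ETree A → ETree A → ETree A
  | .tru, y, _ => y
  | .fls, _, z => z
  | .node l a r, y, z => .node (subst l y z) a (subst r y z)

def hasTru {A : Type} : ETree A → Prop
  | .tru => True
  | .fls => False
  | .node l _ r => hasTru l ∨ hasTru r

def hasFls {A : Type} : ETree A → Prop
  | .tru => False
  | .fls => True
  | .node l _ r => hasFls l ∨ hasFls r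

def depth {A : Type} : ETree A → ℕ
  | .tru => 0
  | .fls => 0
  | .node l _ r => 1 + max (depth l) (depth r)

end ETree

/-- The full evaluation function `fe : FTerm → 𝒯`. -/
def fe {A : Type} : FTerm A → ETree A
  | FTerm.tru => ETree.tru
  | FTerm.fls => ETree.fls
  | FTerm.atom a => ETree.node ETree.tru a ETree.fls
  | FTerm.neg p => (fe p).subst ETree.fls ETree.tru
  | FTerm.and p q => (fe p).subst (fe q) ((fe q).subst ETree.fls ETree.fls)
  | FTerm.or p q => (fe p).subst ((fe q).subst ETree.tru ETree.tru) (fe q)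

/-- The short-circuit evaluation function `se : STerm → 𝒯`. -/
def se {A : Type} : STerm A → ETree A
  | STerm.tru => ETree.tru
  | STerm.fls => ETree.fls
  | STerm.atom a => ETree.node ETree.tru a ETree.fls
  | STerm.neg p => (se p).subst ETree.fls ETree.tru
  | STerm.and p q => (se p).subst (se q) ETree.fls
  | STerm.or p q => (se p).subst ETree.tru (se q)

/-- Derivability from EqFFEL by equational logic. -/
inductive EqFFEL {A : Type} : FTerm A → FTerm A → Prop
  | refl (p : FTerm A) : EqFFEL p p
  | symm {p q : FTerm A} : EqFFEL p q → EqFFEL q p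
  | trans {p q r : FTerm A} : EqFFEL p q → EqFFEL q r → EqFFEL p r
  | neg_congr {p q : FTerm A} : EqFFEL p q → EqFFEL (FTerm.neg p) (FTerm.neg q)
  | and_congr {p p' q q' : FTerm A} :
      EqFFEL p p' → EqFFEL q q' → EqFFEL (FTerm.and p q) (FTerm.and p' q')
  | or_congr {p p' q q' : FTerm A} :
      EqFFEL p p' → EqFFEL q q' → EqFFEL (FTerm.or p q) (FTerm.or p' q')
  | fel1 : EqFFEL FTerm.fls (FTerm.neg FTerm.tru)
  | fel2 (x y : FTerm A) : EqFFEL (FTerm.or x y) (FTerm.neg (FTerm.and (FTerm.neg x) (FTerm.neg y)))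
  | fel3 (x : FTerm A) : EqFFEL (FTerm.neg (FTerm.neg x)) x
  | fel4 (x y z : FTerm A) : EqFFEL (FTerm.and (FTerm.and x y) z) (FTerm.and x (FTerm.and y z))
  | fel5 (x : FTerm A) : EqFFEL (FTerm.and FTerm.tru x) x
  | fel6 (x : FTerm A) : EqFFEL (FTerm.and x FTerm.tru) x
  | fel7 (x : FTerm A) : EqFFEL (FTerm.and x FTerm.fls) (FTerm.and FTerm.fls x)
  | fel8 (x : FTerm A) : EqFFEL (FTerm.and x FTerm.fls) (FTerm.and (FTerm.neg x) FTerm.fls)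
  | fel9 (x y : FTerm A) :
      EqFFEL (FTerm.or (FTerm.and x FTerm.fls) y) (FTerm.and (FTerm.or x FTerm.tru) y)
  | fel10 (x y : FTerm A) :
      EqFFEL (FTerm.or x (FTerm.and y FTerm.fls)) (FTerm.and x (FTerm.or y FTerm.tru))

/-- Derivability from EqFSCL by equational logic. -/
inductive EqFSCL {A : Type} : STerm A → STerm A → Prop
  | refl (p : STerm A) : EqFSCL p p
  | symm {p q : STerm A} : EqFSCL p q → EqFSCL q p
  | trans {p q r : STerm A} : EqFSCL p q → EqFSCL q r → EqFSCL p r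
  | neg_congr {p q : STerm A} : EqFSCL p q → EqFSCL (STerm.neg p) (STerm.neg q)
  | and_congr {p p' q q' : STerm A} :
      EqFSCL p p' → EqFSCL q q' → EqFSCL (STerm.and p q) (STerm.and p' q')
  | or_congr {p p' q q' : STerm A} :
      EqFSCL p p' → EqFSCL q q' → EqFSCL (STerm.or p q) (STerm.or p' q')
  | scl1 : EqFSCL STerm.fls (STerm.neg STerm.tru)
  | scl2 (x y : STerm A) : EqFSCL (STerm.or x y) (STerm.neg (STerm.and (STerm.neg x) (STerm.neg y)))
  | scl3 (x : STerm A) : EqFSCL (STerm.neg (STerm.neg x)) x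
  | scl4 (x y z : STerm A) : EqFSCL (STerm.and (STerm.and x y) z) (STerm.and x (STerm.and y z))
  | scl5 (x : STerm A) : EqFSCL (STerm.and STerm.tru x) x
  | scl6 (x : STerm A) : EqFSCL (STerm.and x STerm.tru) x
  | scl7 (x : STerm A) : EqFSCL (STerm.and STerm.fls x) STerm.fls
  | scl8 (x : STerm A) : EqFSCL (STerm.and x STerm.fls) (STerm.and (STerm.neg x) STerm.fls)
  | scl9 (x y : STerm A) :
      EqFSCL (STerm.or (STerm.and x STerm.fls) y) (STerm.and (STerm.or x STerm.tru) y)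
  | scl10 (x y z : STerm A) :
      EqFSCL (STerm.or (STerm.and x y) (STerm.and z STerm.fls))
             (STerm.and (STerm.or x (STerm.and z STerm.fls)) (STerm.or y (STerm.and z STerm.fls)))

/-! ### FEL Normal Form grammar -/

/-- T-terms: `P^T ::= T | a ∨• P^T`. -/
inductive IsFT_T {A : Type} : FTerm A → Prop
  | tru : IsFT_T FTerm.tru
  | or (a : A) {p : FTerm A} : IsFT_T p → IsFT_T (FTerm.or (FTerm.atom a) p)

/-- F-terms: `P^F ::= F | a ∧• P^F`. -/
inductive IsFT_F {A : Type} : FTerm A → Prop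
  | fls : IsFT_F FTerm.fls
  | and (a : A) {p : FTerm A} : IsFT_F p → IsFT_F (FTerm.and (FTerm.atom a) p)

/-- ℓ-terms: `P^ℓ ::= a ∧• P^T | ¬a ∧• P^T`. -/
inductive IsFT_L {A : Type} : FTerm A → Prop
  | pos (a : A) {p : FTerm A} : IsFT_T p → IsFT_L (FTerm.and (FTerm.atom a) p)
  | neg (a : A) {p : FTerm A} : IsFT_T p → IsFT_L (FTerm.and (FTerm.neg (FTerm.atom a)) p)

mutual
/-- `P^c ::= P^ℓ | P^* ∧• P^d`. -/
inductive IsFT_C {A : Type} : FTerm A → Prop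
  | ell {p : FTerm A} : IsFT_L p → IsFT_C p
  | and {p q : FTerm A} : IsFT_Star p → IsFT_D q → IsFT_C (FTerm.and p q)
/-- `P^d ::= P^ℓ | P^* ∨• P^c`. -/
inductive IsFT_D {A : Type} : FTerm A → Prop
  | ell {p : FTerm A} : IsFT_L p → IsFT_D p
  | or {p q : FTerm A} : IsFT_Star p → IsFT_C q → IsFT_D (FTerm.or p q)
/-- `P^* ::= P^c | P^d`. -/
inductive IsFT_Star {A : Type} : FTerm A → Prop
  | c {p : FTerm A} : IsFT_C p → IsFT_Star p
  | d {p : FTerm A} : IsFT_D p → IsFT_Star p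
end

/-- FEL Normal Form: `P ::= P^T | P^F | P^T ∧• P^*`. -/
inductive IsFNF {A : Type} : FTerm A → Prop
  | t {p : FTerm A} : IsFT_T p → IsFNF p
  | f {p : FTerm A} : IsFT_F p → IsFNF p
  | ts {p q : FTerm A} : IsFT_T p → IsFT_Star q → IsFNF (FTerm.and p q)

/-! ### SCL Normal Form grammar -/

/-- T-terms: `P^T ::= T | (a ∧◦ P^T) ∨◦ P^T`. -/
inductive IsST_T {A : Type} : STerm A → Prop
  | tru : IsST_T STerm.tru
  | or (a : A) {p q : STerm A} :
      IsST_T p → IsST_T q → IsST_T (STerm.or (STerm.and (STerm.atom a) p) q)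

/-- F-terms: `P^F ::= F | (a ∨◦ P^F) ∧◦ P^F`. -/
inductive IsST_F {A : Type} : STerm A → Prop
  | fls : IsST_F STerm.fls
  | and (a : A) {p q : STerm A} :
      IsST_F p → IsST_F q → IsST_F (STerm.and (STerm.or (STerm.atom a) p) q)

/-- ℓ-terms: `P^ℓ ::= (a ∧◦ P^T) ∨◦ P^F | (¬a ∧◦ P^T) ∨◦ P^F`. -/
inductive IsST_L {A : Type} : STerm A → Prop
  | pos (a : A) {p q : STerm A} :
      IsST_T p → IsST_F q → IsST_L (STerm.or (STerm.and (STerm.atom a) p) q)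
  | neg (a : A) {p q : STerm A} :
      IsST_T p → IsST_F q → IsST_L (STerm.or (STerm.and (STerm.neg (STerm.atom a)) p) q)

mutual
/-- `P^c ::= P^ℓ | P^* ∧◦ P^d`. -/
inductive IsST_C {A : Type} : STerm A → Prop
  | ell {p : STerm A} : IsST_L p → IsST_C p
  | and {p q : STerm A} : IsST_Star p → IsST_D q → IsST_C (STerm.and p q)
/-- `P^d ::= P^ℓ | P^* ∨◦ P^c`. -/
inductive IsST_D {A : Type} : STerm A → Prop
  | ell {p : STerm A} : IsST_L p → IsST_D p
  | or {p q : STerm A} : IsST_Star p → IsST_C q → IsST_D (STerm.or p q)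
/-- `P^* ::= P^c | P^d`. -/
inductive IsST_Star {A : Type} : STerm A → Prop
  | c {p : STerm A} : IsST_C p → IsST_Star p
  | d {p : STerm A} : IsST_D p → IsST_Star p
end

/-- SCL Normal Form: `P ::= P^T | P^F | P^T ∧◦ P^*`. -/
inductive IsSNF {A : Type} : STerm A → Prop
  | t {p : STerm A} : IsST_T p → IsSNF p
  | f {p : STerm A} : IsST_F p → IsSNF p
  | ts {p q : STerm A} : IsST_T p → IsST_Star q → IsSNF (STerm.and p q)

/-! ### Trees with box leaves -/

/-- `𝒯_□`: trees over `A` with leaves in `{T, F, □}`. -/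
inductive ETreeB (A : Type) : Type
  | tru  : ETreeB A
  | fls  : ETreeB A
  | box  : ETreeB A
  | node : ETreeB A → A → ETreeB A → ETreeB A

namespace ETreeB

/-- `X.substBox Y = X[□↦Y]`. -/
def substBox {A : Type} : ETreeB A → ETree A → ETree A
  | .tru, _ => ETree.tru
  | .fls, _ => ETree.fls
  | .box, y => y
  | .node l a r, y => ETree.node (substBox l y) a (substBox r y)

def hasBox {A : Type} : ETreeB A → Prop
  | .tru => False
  | .fls => False
  | .box => True
  | .node l _ r => hasBox l ∨ hasBox r

def hasTru {A : Type} : ETreeB A → Prop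
  | .tru => True
  | .fls => False
  | .box => False
  | .node l _ r => hasTru l ∨ hasTru r

def hasFls {A : Type} : ETreeB A → Prop
  | .tru => False
  | .fls => True
  | .box => False
  | .node l _ r => hasFls l ∨ hasFls r

end ETreeB

/-- `𝒯_{1,2}`: trees over `A` with leaves in `{T, F, □₁, □₂}`. -/
inductive ETree2 (A : Type) : Type
  | tru  : ETree2 A
  | fls  : ETree2 A
  | box1 : ETree2 A
  | box2 : ETree2 A
  | node : ETree2 A → A → ETree2 A → ETree2 A

namespace ETree2

/-- `X.substBoxes Y Z = X[□₁↦Y, □₂↦Z]`. -/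
def substBoxes {A : Type} : ETree2 A → ETree A → ETree A → ETree A
  | .tru, _, _ => ETree.tru
  | .fls, _, _ => ETree.fls
  | .box1, y, _ => y
  | .box2, _, z => z
  | .node l a r, y, z => ETree.node (substBoxes l y z) a (substBoxes r y z)

def hasBox1 {A : Type} : ETree2 A → Prop
  | .tru => False
  | .fls => False
  | .box1 => True
  | .box2 => False
  | .node l _ r => hasBox1 l ∨ hasBox1 r

def hasBox2 {A : Type} : ETree2 A → Prop
  | .tru => False
  | .fls => False
  | .box1 => False
  | .box2 => True
  | .node l _ r => hasBox2 l ∨ hasBox2 r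

def hasTru {A : Type} : ETree2 A → Prop
  | .tru => True
  | .fls => False
  | .box1 => False
  | .box2 => False
  | .node l _ r => hasTru l ∨ hasTru r

def hasFls {A : Type} : ETree2 A → Prop
  | .tru => False
  | .fls => True
  | .box1 => False
  | .box2 => False
  | .node l _ r => hasFls l ∨ hasFls r

end ETree2

namespace ETree

/-- `X[T↦□₁, F↦□₂]`. -/
def toBoxes {A : Type} : ETree A → ETree2 A
  | .tru => ETree2.box1
  | .fls => ETree2.box2
  | .node l a r => ETree2.node (toBoxes l) a (toBoxes r)

/-- `X[T↦□]`. -/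
def truToBox {A : Type} : ETree A → ETreeB A
  | .tru => ETreeB.box
  | .fls => ETreeB.fls
  | .node l a r => ETreeB.node (truToBox l) a (truToBox r)

/-- `X[F↦□]`. -/
def flsToBox {A : Type} : ETree A → ETreeB A
  | .tru => ETreeB.tru
  | .fls => ETreeB.box
  | .node l a r => ETreeB.node (flsToBox l) a (flsToBox r)

end ETree

/-! ### FEL decompositions -/

/-- Candidate conjunction decomposition (FEL):
    `X = Y[□₁↦Z, □₂↦Z[T↦F]]`, `Y` contains both boxes, neither `T` nor `F`,
    and `Z` contains both `T` and `F`. -/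
def IsCcdF {A : Type} (X : ETree A) (Y : ETree2 A) (Z : ETree A) : Prop :=
  X = Y.substBoxes Z (Z.subst ETree.fls ETree.fls) ∧
  Y.hasBox1 ∧ Y.hasBox2 ∧ ¬ Y.hasTru ∧ ¬ Y.hasFls ∧ Z.hasTru ∧ Z.hasFls

/-- Candidate disjunction decomposition (FEL):
    `X = Y[□₁↦Z[F↦T], □₂↦Z]` with the same side conditions. -/
def IsCddF {A : Type} (X : ETree A) (Y : ETree2 A) (Z : ETree A) : Prop :=
  X = Y.substBoxes (Z.subst ETree.tru ETree.tru) Z ∧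
  Y.hasBox1 ∧ Y.hasBox2 ∧ ¬ Y.hasTru ∧ ¬ Y.hasFls ∧ Z.hasTru ∧ Z.hasFls

/-- Conjunction decomposition (FEL): a ccd with `Z` of minimal depth. -/
def IsCdF {A : Type} (X : ETree A) (Y : ETree2 A) (Z : ETree A) : Prop :=
  IsCcdF X Y Z ∧ ∀ (Y' : ETree2 A) (Z' : ETree A), IsCcdF X Y' Z' → Z.depth ≤ Z'.depth

/-- Disjunction decomposition (FEL): a cdd with `Z` of minimal depth. -/
def IsDdF {A : Type} (X : ETree A) (Y : ETree2 A) (Z : ETree A) : Prop :=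
  IsCddF X Y Z ∧ ∀ (Y' : ETree2 A) (Z' : ETree A), IsCddF X Y' Z' → Z.depth ≤ Z'.depth

/-- T-*-decomposition (FEL): `X = Y[□↦Z]`, `Y` contains neither `T` nor `F`,
    and `Z` admits no nontrivial box decomposition. -/
def IsTsdF {A : Type} (X : ETree A) (Y : ETreeB A) (Z : ETree A) : Prop :=
  X = Y.substBox Z ∧ ¬ Y.hasTru ∧ ¬ Y.hasFls ∧
  ¬ ∃ (U : ETreeB A) (V : ETree A),
      Z = U.substBox V ∧ U.hasBox ∧ U ≠ ETreeB.box ∧ ¬ U.hasTru ∧ ¬ U.hasFls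

/-! ### SCL decompositions -/

/-- Candidate conjunction decomposition (SCL): `X = Y[□↦Z]`, `Y` contains `□`,
    `Y` contains `F` but not `T`, and `Z` contains both `T` and `F`. -/
def IsCcdS {A : Type} (X : ETree A) (Y : ETreeB A) (Z : ETree A) : Prop :=
  X = Y.substBox Z ∧ Y.hasBox ∧ Y.hasFls ∧ ¬ Y.hasTru ∧ Z.hasTru ∧ Z.hasFls

/-- Candidate disjunction decomposition (SCL): `X = Y[□↦Z]`, `Y` contains `□`,
    `Y` contains `T` but not `F`, and `Z` contains both `T` and `F`. -/
def IsCddS {A : Type} (X : ETree A) (Y : ETreeB A) (Z : ETree A) : Prop :=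
  X = Y.substBox Z ∧ Y.hasBox ∧ Y.hasTru ∧ ¬ Y.hasFls ∧ Z.hasTru ∧ Z.hasFls

/-- Conjunction decomposition (SCL): a ccd with `Z` of minimal depth. -/
def IsCdS {A : Type} (X : ETree A) (Y : ETreeB A) (Z : ETree A) : Prop :=
  IsCcdS X Y Z ∧ ∀ (Y' : ETreeB A) (Z' : ETree A), IsCcdS X Y' Z' → Z.depth ≤ Z'.depth

/-- Disjunction decomposition (SCL): a cdd with `Z` of minimal depth. -/
def IsDdS {A : Type} (X : ETree A) (Y : ETreeB A) (Z : ETree A) : Prop :=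
  IsCddS X Y Z ∧ ∀ (Y' : ETreeB A) (Z' : ETree A), IsCddS X Y' Z' → Z.depth ≤ Z'.depth

/-- Candidate T-*-decomposition (SCL). -/
def IsCtsdS {A : Type} (X : ETree A) (Y : ETreeB A) (Z : ETree A) : Prop :=
  X = Y.substBox Z ∧ ¬ Y.hasTru ∧ ¬ Y.hasFls ∧
  ¬ ∃ (U : ETreeB A) (V : ETree A),
      Z = U.substBox V ∧ U.hasBox ∧ U ≠ ETreeB.box ∧ ¬ U.hasTru ∧ ¬ U.hasFls

/-- T-*-decomposition (SCL): a ctsd with `Z` of minimal depth. -/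
def IsTsdS {A : Type} (X : ETree A) (Y : ETreeB A) (Z : ETree A) : Prop :=
  IsCtsdS X Y Z ∧ ∀ (Y' : ETreeB A) (Z' : ETree A), IsCtsdS X Y' Z' → Z.depth ≤ Z'.depth

/-- The translation `h : FTerm → STerm` from FEL-terms to SCL-terms. -/
def hTrans {A : Type} : FTerm A → STerm A
  | FTerm.tru => STerm.tru
  | FTerm.fls => STerm.fls
  | FTerm.atom a => STerm.atom a
  | FTerm.neg p => STerm.neg (hTrans p)
  | FTerm.and p q => STerm.and (STerm.or (hTrans p) (STerm.and (hTrans q) STerm.fls)) (hTrans q)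
  | FTerm.or p q => STerm.or (STerm.and (hTrans p) (STerm.or (hTrans q) STerm.tru)) (hTrans q)

/-! ### Auxiliary development for the SCL decomposition theorem -/

namespace SclAux

variable {A : Type}

/- Basic simp lemmas for `subst`, `hasTru`, `hasFls`, `depth`. -/

@[simp] theorem esubst_tru (Y Z : ETree A) : ETree.subst ETree.tru Y Z = Y := rfl
@[simp] theorem esubst_fls (Y Z : ETree A) : ETree.subst ETree.fls Y Z = Z := rfl
@[simp] theorem esubst_node (l : ETree A) (a : A) (r Y Z : ETree A) :
    ETree.subst (ETree.node l a r) Y Z = ETree.node (l.subst Y Z) a (r.subst Y Z) := rfl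

@[simp] theorem ehasTru_tru : (ETree.tru : ETree A).hasTru ↔ True := Iff.rfl
@[simp] theorem ehasTru_fls : (ETree.fls : ETree A).hasTru ↔ False := Iff.rfl
@[simp] theorem ehasTru_node {l r : ETree A} {a : A} :
    (ETree.node l a r).hasTru ↔ l.hasTru ∨ r.hasTru := Iff.rfl
@[simp] theorem ehasFls_tru : (ETree.tru : ETree A).hasFls ↔ False := Iff.rfl
@[simp] theorem ehasFls_fls : (ETree.fls : ETree A).hasFls ↔ True := Iff.rfl
@[simp] theorem ehasFls_node {l r : ETree A} {a : A} :
    (ETree.node l a r).hasFls ↔ l.hasFls ∨ r.hasFls := Iff.rfl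

@[simp] theorem edepth_tru : (ETree.tru : ETree A).depth = 0 := rfl
@[simp] theorem edepth_fls : (ETree.fls : ETree A).depth = 0 := rfl
@[simp] theorem edepth_node (l : ETree A) (a : A) (r : ETree A) :
    (ETree.node l a r).depth = 1 + max l.depth r.depth := rfl

@[simp] theorem bsub_tru (Z : ETree A) : (ETreeB.tru : ETreeB A).substBox Z = ETree.tru := rfl
@[simp] theorem bsub_fls (Z : ETree A) : (ETreeB.fls : ETreeB A).substBox Z = ETree.fls := rfl
@[simp] theorem bsub_box (Z : ETree A) : (ETreeB.box : ETreeB A).substBox Z = Z := rfl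
@[simp] theorem bsub_node (l : ETreeB A) (a : A) (r : ETreeB A) (Z : ETree A) :
    (ETreeB.node l a r).substBox Z = ETree.node (l.substBox Z) a (r.substBox Z) := rfl

@[simp] theorem bhasBox_tru : (ETreeB.tru : ETreeB A).hasBox ↔ False := Iff.rfl
@[simp] theorem bhasBox_fls : (ETreeB.fls : ETreeB A).hasBox ↔ False := Iff.rfl
@[simp] theorem bhasBox_box : (ETreeB.box : ETreeB A).hasBox ↔ True := Iff.rfl
@[simp] theorem bhasBox_node {l r : ETreeB A} {a : A} :
    (ETreeB.node l a r).hasBox ↔ l.hasBox ∨ r.hasBox := Iff.rfl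

@[simp] theorem bhasTru_tru : (ETreeB.tru : ETreeB A).hasTru ↔ True := Iff.rfl
@[simp] theorem bhasTru_fls : (ETreeB.fls : ETreeB A).hasTru ↔ False := Iff.rfl
@[simp] theorem bhasTru_box : (ETreeB.box : ETreeB A).hasTru ↔ False := Iff.rfl
@[simp] theorem bhasTru_node {l r : ETreeB A} {a : A} :
    (ETreeB.node l a r).hasTru ↔ l.hasTru ∨ r.hasTru := Iff.rfl
@[simp] theorem bhasFls_tru : (ETreeB.tru : ETreeB A).hasFls ↔ False := Iff.rfl
@[simp] theorem bhasFls_fls : (ETreeB.fls : ETreeB A).hasFls ↔ True := Iff.rfl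
@[simp] theorem bhasFls_box : (ETreeB.box : ETreeB A).hasFls ↔ False := Iff.rfl
@[simp] theorem bhasFls_node {l r : ETreeB A} {a : A} :
    (ETreeB.node l a r).hasFls ↔ l.hasFls ∨ r.hasFls := Iff.rfl

@[simp] theorem truToBox_tru : (ETree.tru : ETree A).truToBox = ETreeB.box := rfl
@[simp] theorem truToBox_fls : (ETree.fls : ETree A).truToBox = ETreeB.fls := rfl
@[simp] theorem truToBox_node (l : ETree A) (a : A) (r : ETree A) :
    (ETree.node l a r).truToBox = ETreeB.node l.truToBox a r.truToBox := rfl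
@[simp] theorem flsToBox_tru : (ETree.tru : ETree A).flsToBox = ETreeB.tru := rfl
@[simp] theorem flsToBox_fls : (ETree.fls : ETree A).flsToBox = ETreeB.box := rfl
@[simp] theorem flsToBox_node (l : ETree A) (a : A) (r : ETree A) :
    (ETree.node l a r).flsToBox = ETreeB.node l.flsToBox a r.flsToBox := rfl

theorem hasTru_or_hasFls (X : ETree A) : X.hasTru ∨ X.hasFls := by
  induction X with
  | tru => simp
  | fls => simp
  | node l a r ihl ihr => simp only [ehasTru_node, ehasFls_node]; tauto

theorem hasTru_subst (X Y Z : ETree A) :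
    (X.subst Y Z).hasTru ↔ (X.hasTru ∧ Y.hasTru) ∨ (X.hasFls ∧ Z.hasTru) := by
  induction X with
  | tru => simp
  | fls => simp
  | node l a r ihl ihr => simp only [esubst_node, ehasTru_node, ehasFls_node, ihl, ihr]; tauto

theorem hasFls_subst (X Y Z : ETree A) :
    (X.subst Y Z).hasFls ↔ (X.hasTru ∧ Y.hasFls) ∨ (X.hasFls ∧ Z.hasFls) := by
  induction X with
  | tru => simp
  | fls => simp
  | node l a r ihl ihr => simp only [esubst_node, ehasFls_node, ehasTru_node, ihl, ihr]; tauto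

theorem subst_assoc (X Y Z U V : ETree A) :
    (X.subst Y Z).subst U V = X.subst (Y.subst U V) (Z.subst U V) := by
  induction X with
  | tru => rfl
  | fls => rfl
  | node l a r ihl ihr => simp only [esubst_node, ihl, ihr]

theorem subst_congr_noFls {X : ETree A} (h : ¬X.hasFls) (Y Z Z' : ETree A) :
    X.subst Y Z = X.subst Y Z' := by
  induction X with
  | tru => rfl
  | fls => simp at h
  | node l a r ihl ihr =>
    simp only [ehasFls_node, not_or] at h
    simp only [esubst_node, ihl h.1, ihr h.2]

theorem subst_congr_noTru {X : ETree A} (h : ¬X.hasTru) (Y Y' Z : ETree A) :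
    X.subst Y Z = X.subst Y' Z := by
  induction X with
  | tru => simp at h
  | fls => rfl
  | node l a r ihl ihr =>
    simp only [ehasTru_node, not_or] at h
    simp only [esubst_node, ihl h.1, ihr h.2]

theorem subst_id_noTru {X : ETree A} (h : ¬X.hasTru) (Y : ETree A) :
    X.subst Y ETree.fls = X := by
  induction X with
  | tru => simp at h
  | fls => rfl
  | node l a r ihl ihr =>
    simp only [ehasTru_node, not_or] at h
    simp only [esubst_node, ihl h.1, ihr h.2]

theorem subst_id_noFls {X : ETree A} (h : ¬X.hasFls) (Z : ETree A) :
    X.subst ETree.tru Z = X := by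
  induction X with
  | tru => rfl
  | fls => simp at h
  | node l a r ihl ihr =>
    simp only [ehasFls_node, not_or] at h
    simp only [esubst_node, ihl h.1, ihr h.2]

theorem depth_subst_ge_T {X : ETree A} (h : X.hasTru) (Y Z : ETree A) :
    Y.depth ≤ (X.subst Y Z).depth := by
  induction X with
  | tru => simp
  | fls => simp at h
  | node l a r ihl ihr =>
    simp only [esubst_node, edepth_node]
    rcases h with h | h
    · have := ihl h; omega
    · have := ihr h; omega

theorem depth_subst_ge_F {X : ETree A} (h : X.hasFls) (Y Z : ETree A) :
    Z.depth ≤ (X.subst Y Z).depth := by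
  induction X with
  | tru => simp at h
  | fls => simp
  | node l a r ihl ihr =>
    simp only [esubst_node, edepth_node]
    rcases h with h | h
    · have := ihl h; omega
    · have := ihr h; omega

theorem depth_subst_gt_T {l : ETree A} {a : A} {r : ETree A}
    (h : (ETree.node l a r).hasTru) (Y Z : ETree A) :
    Y.depth < ((ETree.node l a r).subst Y Z).depth := by
  simp only [esubst_node, edepth_node]
  rcases h with h | h
  · have := depth_subst_ge_T h Y Z; omega
  · have := depth_subst_ge_T h Y Z; omega

def esz : ETree A → Nat
  | ETree.tru => 1
  | ETree.fls => 1
  | ETree.node l _ r => esz l + esz r + 1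

@[simp] theorem esz_tru : esz (ETree.tru : ETree A) = 1 := rfl
@[simp] theorem esz_fls : esz (ETree.fls : ETree A) = 1 := rfl
@[simp] theorem esz_node (l : ETree A) (a : A) (r : ETree A) :
    esz (ETree.node l a r) = esz l + esz r + 1 := rfl

theorem esz_pos (X : ETree A) : 1 ≤ esz X := by
  cases X <;> simp

theorem esz_subst_ge_T {X : ETree A} (h : X.hasTru) (Y Z : ETree A) :
    esz Y ≤ esz (X.subst Y Z) := by
  induction X with
  | tru => simp
  | fls => simp at h
  | node l a r ihl ihr =>
    simp only [esubst_node, esz_node]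
    rcases h with h | h
    · have := ihl h; omega
    · have := ihr h; omega

theorem esz_subst_ge_F {X : ETree A} (h : X.hasFls) (Y Z : ETree A) :
    esz Z ≤ esz (X.subst Y Z) := by
  induction X with
  | tru => simp at h
  | fls => simp
  | node l a r ihl ihr =>
    simp only [esubst_node, esz_node]
    rcases h with h | h
    · have := ihl h; omega
    · have := ihr h; omega

theorem esz_subst_gt_T {l : ETree A} {a : A} {r : ETree A}
    (h : (ETree.node l a r).hasTru) (Y Z : ETree A) :
    esz Y < esz ((ETree.node l a r).subst Y Z) := by
  simp only [esubst_node, esz_node]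
  have h1 := esz_pos (l.subst Y Z)
  have h2 := esz_pos (r.subst Y Z)
  rcases h with h | h
  · have := esz_subst_ge_T h Y Z; omega
  · have := esz_subst_ge_T h Y Z; omega

theorem esz_subst_gt_F {l : ETree A} {a : A} {r : ETree A}
    (h : (ETree.node l a r).hasFls) (Y Z : ETree A) :
    esz Z < esz ((ETree.node l a r).subst Y Z) := by
  simp only [esubst_node, esz_node]
  have h1 := esz_pos (l.subst Y Z)
  have h2 := esz_pos (r.subst Y Z)
  rcases h with h | h
  · have := esz_subst_ge_F h Y Z; omega
  · have := esz_subst_ge_F h Y Z; omega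

theorem hasTru_substBox (Y : ETreeB A) (Z : ETree A) :
    (Y.substBox Z).hasTru ↔ Y.hasTru ∨ (Y.hasBox ∧ Z.hasTru) := by
  induction Y with
  | tru => simp
  | fls => simp
  | box => simp
  | node l a r ihl ihr => simp only [bsub_node, ehasTru_node, bhasTru_node, bhasBox_node, ihl, ihr]; tauto

theorem hasFls_substBox (Y : ETreeB A) (Z : ETree A) :
    (Y.substBox Z).hasFls ↔ Y.hasFls ∨ (Y.hasBox ∧ Z.hasFls) := by
  induction Y with
  | tru => simp
  | fls => simp
  | box => simp
  | node l a r ihl ihr => simp only [bsub_node, ehasFls_node, bhasFls_node, bhasBox_node, ihl, ihr]; tauto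

theorem depth_substBox_ge {Y : ETreeB A} (h : Y.hasBox) (Z : ETree A) :
    Z.depth ≤ (Y.substBox Z).depth := by
  induction Y with
  | tru => simp at h
  | fls => simp at h
  | box => simp
  | node l a r ihl ihr =>
    simp only [bsub_node, edepth_node]
    rcases h with h | h
    · have := ihl h; omega
    · have := ihr h; omega

theorem depth_substBox_gt {Y : ETreeB A} (h : Y.hasBox) (hne : Y ≠ ETreeB.box) (Z : ETree A) :
    Z.depth < (Y.substBox Z).depth := by
  cases Y with
  | tru => simp at h
  | fls => simp at h
  | box => exact absurd rfl hne
  | node l a r =>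
    simp only [bsub_node, edepth_node]
    rcases h with h | h
    · have := depth_substBox_ge h Z; omega
    · have := depth_substBox_ge h Z; omega

theorem truToBox_substBox (X Z : ETree A) :
    (X.truToBox).substBox Z = X.subst Z ETree.fls := by
  induction X with
  | tru => rfl
  | fls => rfl
  | node l a r ihl ihr => simp only [truToBox_node, bsub_node, esubst_node, ihl, ihr]

theorem flsToBox_substBox (X Z : ETree A) :
    (X.flsToBox).substBox Z = X.subst ETree.tru Z := by
  induction X with
  | tru => rfl
  | fls => rfl
  | node l a r ihl ihr => simp only [flsToBox_node, bsub_node, esubst_node, ihl, ihr]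

theorem hasBox_truToBox (X : ETree A) : (X.truToBox).hasBox ↔ X.hasTru := by
  induction X with
  | tru => simp
  | fls => simp
  | node l a r ihl ihr => simp [ihl, ihr]

theorem hasFls_truToBox (X : ETree A) : (X.truToBox).hasFls ↔ X.hasFls := by
  induction X with
  | tru => simp
  | fls => simp
  | node l a r ihl ihr => simp [ihl, ihr]

theorem not_hasTru_truToBox (X : ETree A) : ¬(X.truToBox).hasTru := by
  induction X with
  | tru => simp
  | fls => simp
  | node l a r ihl ihr => simp [ihl, ihr]

theorem hasBox_flsToBox (X : ETree A) : (X.flsToBox).hasBox ↔ X.hasFls := by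
  induction X with
  | tru => simp
  | fls => simp
  | node l a r ihl ihr => simp [ihl, ihr]

theorem hasTru_flsToBox (X : ETree A) : (X.flsToBox).hasTru ↔ X.hasTru := by
  induction X with
  | tru => simp
  | fls => simp
  | node l a r ihl ihr => simp [ihl, ihr]

theorem not_hasFls_flsToBox (X : ETree A) : ¬(X.flsToBox).hasFls := by
  induction X with
  | tru => simp
  | fls => simp
  | node l a r ihl ihr => simp [ihl, ihr]

theorem noBox_flsToBox {Y : ETreeB A} {Z V : ETree A} (hb : ¬Y.hasBox) (hf : ¬Y.hasFls)
    (h : Y.substBox Z = V) : Y = V.flsToBox := by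
  induction Y generalizing V with
  | tru => subst h; rfl
  | fls => simp at hf
  | box => simp at hb
  | node l a r ihl ihr =>
    simp only [bhasBox_node, not_or] at hb
    simp only [bhasFls_node, not_or] at hf
    subst h
    simp only [bsub_node, flsToBox_node]
    rw [← ihl hb.1 hf.1 rfl, ← ihr hb.2 hf.2 rfl]

theorem noBox_truToBox {Y : ETreeB A} {Z V : ETree A} (hb : ¬Y.hasBox) (hf : ¬Y.hasTru)
    (h : Y.substBox Z = V) : Y = V.truToBox := by
  induction Y generalizing V with
  | tru => simp at hf
  | fls => subst h; rfl
  | box => simp at hb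
  | node l a r ihl ihr =>
    simp only [bhasBox_node, not_or] at hb
    simp only [bhasTru_node, not_or] at hf
    subst h
    simp only [bsub_node, truToBox_node]
    rw [← ihl hb.1 hf.1 rfl, ← ihr hb.2 hf.2 rfl]

end SclAux

namespace SclAux

variable {A : Type}

/-! ### Mirror duality -/

def mir : ETree A → ETree A
  | ETree.tru => ETree.fls
  | ETree.fls => ETree.tru
  | ETree.node l a r => ETree.node (mir l) a (mir r)

def mirB : ETreeB A → ETreeB A
  | ETreeB.tru => ETreeB.fls
  | ETreeB.fls => ETreeB.tru
  | ETreeB.box => ETreeB.box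
  | ETreeB.node l a r => ETreeB.node (mirB l) a (mirB r)

@[simp] theorem mir_tru : mir (ETree.tru : ETree A) = ETree.fls := rfl
@[simp] theorem mir_fls : mir (ETree.fls : ETree A) = ETree.tru := rfl
@[simp] theorem mir_node (l : ETree A) (a : A) (r : ETree A) :
    mir (ETree.node l a r) = ETree.node (mir l) a (mir r) := rfl
@[simp] theorem mirB_tru : mirB (ETreeB.tru : ETreeB A) = ETreeB.fls := rfl
@[simp] theorem mirB_fls : mirB (ETreeB.fls : ETreeB A) = ETreeB.tru := rfl
@[simp] theorem mirB_box : mirB (ETreeB.box : ETreeB A) = ETreeB.box := rfl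
@[simp] theorem mirB_node (l : ETreeB A) (a : A) (r : ETreeB A) :
    mirB (ETreeB.node l a r) = ETreeB.node (mirB l) a (mirB r) := rfl

@[simp] theorem mir_mir (X : ETree A) : mir (mir X) = X := by
  induction X with
  | tru => rfl
  | fls => rfl
  | node l a r ihl ihr => simp [ihl, ihr]

@[simp] theorem mirB_mirB (Y : ETreeB A) : mirB (mirB Y) = Y := by
  induction Y with
  | tru => rfl
  | fls => rfl
  | box => rfl
  | node l a r ihl ihr => simp [ihl, ihr]

theorem hasTru_mir (X : ETree A) : (mir X).hasTru ↔ X.hasFls := by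
  induction X with
  | tru => simp
  | fls => simp
  | node l a r ihl ihr => simp [ihl, ihr]

theorem hasFls_mir (X : ETree A) : (mir X).hasFls ↔ X.hasTru := by
  induction X with
  | tru => simp
  | fls => simp
  | node l a r ihl ihr => simp [ihl, ihr]

theorem depth_mir (X : ETree A) : (mir X).depth = X.depth := by
  induction X with
  | tru => rfl
  | fls => rfl
  | node l a r ihl ihr => simp [ihl, ihr]

theorem mir_subst (X Y Z : ETree A) : mir (X.subst Y Z) = (mir X).subst (mir Z) (mir Y) := by
  induction X with
  | tru => rfl
  | fls => rfl
  | node l a r ihl ihr => simp [ihl, ihr]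

theorem mir_substBox (Y : ETreeB A) (Z : ETree A) :
    mir (Y.substBox Z) = (mirB Y).substBox (mir Z) := by
  induction Y with
  | tru => rfl
  | fls => rfl
  | box => rfl
  | node l a r ihl ihr => simp [ihl, ihr]

theorem hasBox_mirB (Y : ETreeB A) : (mirB Y).hasBox ↔ Y.hasBox := by
  induction Y with
  | tru => simp
  | fls => simp
  | box => simp
  | node l a r ihl ihr => simp [ihl, ihr]

theorem hasTru_mirB (Y : ETreeB A) : (mirB Y).hasTru ↔ Y.hasFls := by
  induction Y with
  | tru => simp
  | fls => simp
  | box => simp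
  | node l a r ihl ihr => simp [ihl, ihr]

theorem hasFls_mirB (Y : ETreeB A) : (mirB Y).hasFls ↔ Y.hasTru := by
  induction Y with
  | tru => simp
  | fls => simp
  | box => simp
  | node l a r ihl ihr => simp [ihl, ihr]

theorem mirB_eq_box {Y : ETreeB A} : mirB Y = ETreeB.box ↔ Y = ETreeB.box := by
  cases Y <;> simp

theorem mirB_truToBox (X : ETree A) : mirB (X.truToBox) = (mir X).flsToBox := by
  induction X with
  | tru => rfl
  | fls => rfl
  | node l a r ihl ihr => simp [ihl, ihr]

/-! ### Tree classes: ℓ-trees and ∗-trees -/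

inductive LT : ETree A → Prop
  | pos (U V : ETree A) (a : A) (hU : ¬U.hasFls) (hV : ¬V.hasTru) : LT (ETree.node U a V)
  | neg (U V : ETree A) (a : A) (hU : ¬U.hasFls) (hV : ¬V.hasTru) : LT (ETree.node V a U)

inductive ST : ETree A → Prop
  | ell (X : ETree A) : LT X → ST X
  | and (X S : ETree A) : ST X → ST S → ST (X.subst S ETree.fls)
  | or (X S : ETree A) : ST X → ST S → ST (X.subst ETree.tru S)

theorem LT.props {X : ETree A} (h : LT X) :
    X.hasTru ∧ X.hasFls ∧ ∃ l a r, X = ETree.node l a r := by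
  cases h with
  | pos U V a hU hV =>
    refine ⟨Or.inl (Or.resolve_right (hasTru_or_hasFls U) hU), Or.inr (Or.resolve_left (hasTru_or_hasFls V) hV), U, a, V, rfl⟩
  | neg U V a hU hV =>
    refine ⟨Or.inr (Or.resolve_right (hasTru_or_hasFls U) hU), Or.inl (Or.resolve_left (hasTru_or_hasFls V) hV), V, a, U, rfl⟩

theorem ST.props {X : ETree A} (h : ST X) :
    X.hasTru ∧ X.hasFls ∧ ∃ l a r, X = ETree.node l a r := by
  induction h with
  | ell X hL => exact hL.props
  | and X S hX hS ihX ihS =>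
    refine ⟨(hasTru_subst X S ETree.fls).mpr (Or.inl ⟨ihX.1, ihS.1⟩),
      (hasFls_subst X S ETree.fls).mpr (Or.inl ⟨ihX.1, ihS.2.1⟩), ?_⟩
    obtain ⟨l, a, r, he⟩ := ihX.2.2
    exact ⟨l.subst S ETree.fls, a, r.subst S ETree.fls, by rw [he]; rfl⟩
  | or X S hX hS ihX ihS =>
    refine ⟨(hasTru_subst X ETree.tru S).mpr (Or.inl ⟨ihX.1, by simp⟩),
      (hasFls_subst X ETree.tru S).mpr (Or.inr ⟨ihX.2.1, ihS.2.1⟩), ?_⟩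
    obtain ⟨l, a, r, he⟩ := ihX.2.2
    exact ⟨l.subst ETree.tru S, a, r.subst ETree.tru S, by rw [he]; rfl⟩

theorem LT.mir {X : ETree A} (h : LT X) : LT (SclAux.mir X) := by
  cases h with
  | pos U V a hU hV =>
    rw [mir_node]
    exact LT.neg (SclAux.mir V) (SclAux.mir U) a (by rw [hasFls_mir]; exact hV) (by rw [hasTru_mir]; exact hU)
  | neg U V a hU hV =>
    rw [mir_node]
    exact LT.pos (SclAux.mir V) (SclAux.mir U) a (by rw [hasFls_mir]; exact hV) (by rw [hasTru_mir]; exact hU)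

theorem ST.mir {X : ETree A} (h : ST X) : ST (SclAux.mir X) := by
  induction h with
  | ell X hL => exact ST.ell _ hL.mir
  | and X S hX hS ihX ihS =>
    rw [mir_subst]
    exact ST.or _ _ ihX ihS
  | or X S hX hS ihX ihS =>
    rw [mir_subst]
    exact ST.and _ _ ihX ihS

/-! ### Cuts (decompositions) -/

def Cut (X : ETree A) (Y : ETreeB A) (Z : ETree A) : Prop :=
  X = Y.substBox Z ∧ Y.hasBox ∧ Z.hasTru ∧ Z.hasFls

def TrivF (X : ETree A) : Prop := ∀ Y Z, Cut X Y Z → ¬Y.hasFls → Y = ETreeB.box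

def TrivT (X : ETree A) : Prop := ∀ Y Z, Cut X Y Z → ¬Y.hasTru → Y = ETreeB.box

def NFC (G Z : ETree A) : Prop :=
  ∃ Yg : ETreeB A, G = Yg.substBox Z ∧ Yg.hasBox ∧ Yg ≠ ETreeB.box ∧ ¬Yg.hasFls

theorem Cut.mir {X : ETree A} {Y : ETreeB A} {Z : ETree A} (h : Cut X Y Z) :
    Cut (SclAux.mir X) (mirB Y) (SclAux.mir Z) := by
  obtain ⟨h1, h2, h3, h4⟩ := h
  exact ⟨by rw [h1, mir_substBox], by rw [hasBox_mirB]; exact h2,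
    by rw [hasTru_mir]; exact h4, by rw [hasFls_mir]; exact h3⟩

theorem TrivT_of_mir {X : ETree A} (h : TrivF (SclAux.mir X)) : TrivT X := by
  intro Y Z hc hY
  have := h (mirB Y) (SclAux.mir Z) hc.mir (by rw [hasFls_mirB]; exact hY)
  rwa [mirB_eq_box] at this

theorem NFC.depth_lt {G Z : ETree A} (h : NFC G Z) : Z.depth < G.depth := by
  obtain ⟨Yg, h1, h2, h3, _⟩ := h
  rw [h1]
  exact depth_substBox_gt h2 h3 Z

theorem trivF_of_LT {X : ETree A} (h : LT X) : TrivF X := by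
  intro Y Z hc hY
  obtain ⟨hc1, hc2, hc3, hc4⟩ := hc
  cases h with
  | pos U V a hU hV =>
    cases Y with
    | box => rfl
    | tru => simp at hc2
    | fls => simp at hc2
    | node Yl c Yr =>
      exfalso
      rw [bsub_node] at hc1
      injection hc1 with h1 h2 h3
      by_cases hb : Yr.hasBox
      · have : V.hasTru := by rw [h3, hasTru_substBox]; exact Or.inr ⟨hb, hc3⟩
        exact hV this
      · have : Yr.hasFls := by
          have hvf : V.hasFls := Or.resolve_left (hasTru_or_hasFls V) hV
          rw [h3, hasFls_substBox] at hvf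
          tauto
        exact hY (Or.inr this)
  | neg U V a hU hV =>
    cases Y with
    | box => rfl
    | tru => simp at hc2
    | fls => simp at hc2
    | node Yl c Yr =>
      exfalso
      rw [bsub_node] at hc1
      injection hc1 with h1 h2 h3
      by_cases hb : Yl.hasBox
      · have : V.hasTru := by rw [h1, hasTru_substBox]; exact Or.inr ⟨hb, hc3⟩
        exact hV this
      · have : Yl.hasFls := by
          have hvf : V.hasFls := Or.resolve_left (hasTru_or_hasFls V) hV
          rw [h1, hasFls_substBox] at hvf
          tauto
        exact hY (Or.inl this)

end SclAux

namespace SclAux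

variable {A : Type}

/-! ### The separation invariant J and graft injectivity -/

theorem Jbase {S : ETree A} (hS : S.hasTru) :
    ∀ C K : ETree A, ¬C.hasFls → K.hasFls → C.subst S ETree.fls ≠ K.subst S ETree.fls := by
  intro C
  induction C with
  | tru =>
    intro K hC hK heq
    rw [esubst_tru] at heq
    cases K with
    | tru => simp at hK
    | fls => rw [esubst_fls] at heq; rw [heq] at hS; simp at hS
    | node l b r =>
      by_cases ht : (ETree.node l b r).hasTru
      · have := esz_subst_gt_T ht S ETree.fls
        rw [← heq] at this
        omega
      · rw [subst_id_noTru ht] at heq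
        rw [heq] at hS
        exact ht hS
  | fls => intro K hC hK heq; simp at hC
  | node l a r ihl ihr =>
    intro K hC hK heq
    cases K with
    | tru => simp at hK
    | fls =>
      rw [esubst_fls, esubst_node] at heq
      exact absurd heq (by simp)
    | node l' b r' =>
      rw [esubst_node, esubst_node] at heq
      injection heq with h1 h2 h3
      simp only [ehasFls_node, not_or] at hC
      rcases (show l'.hasFls ∨ r'.hasFls from hK) with hK | hK
      · exact ihl l' hC.1 hK h1
      · exact ihr r' hC.2 hK h3

def J (G H : ETree A) : Prop :=
  ∀ C K : ETree A, ¬C.hasFls → K.hasFls → C.subst G H ≠ K.subst G H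

theorem INJ {G H : ETree A} (hG : G.hasTru) (hJ : J G H) :
    ∀ X X' : ETree A, X.subst G H = X'.subst G H → X = X' := by
  intro X
  induction X with
  | tru =>
    intro X' heq
    cases X' with
    | tru => rfl
    | fls => exact absurd heq (hJ ETree.tru ETree.fls (by simp) (by simp))
    | node l b r =>
      by_cases ht : (ETree.node l b r).hasTru
      · have := esz_subst_gt_T ht G H
        rw [← heq, esubst_tru] at this
        omega
      · exact absurd heq (hJ ETree.tru (ETree.node l b r) (by simp)
          (Or.resolve_left (hasTru_or_hasFls _) ht))
  | fls =>
    intro X' heq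
    cases X' with
    | fls => rfl
    | tru => exact absurd heq.symm (hJ ETree.tru ETree.fls (by simp) (by simp))
    | node l b r =>
      by_cases hf : (ETree.node l b r).hasFls
      · have := esz_subst_gt_F hf G H
        rw [← heq, esubst_fls] at this
        omega
      · exact absurd heq.symm (hJ (ETree.node l b r) ETree.fls hf (by simp))
  | node l a r ihl ihr =>
    intro X' heq
    cases X' with
    | tru =>
      by_cases ht : (ETree.node l a r).hasTru
      · have := esz_subst_gt_T ht G H
        rw [heq, esubst_tru] at this
        omega
      · exact absurd heq.symm (hJ ETree.tru (ETree.node l a r) (by simp)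
          (Or.resolve_left (hasTru_or_hasFls _) ht))
    | fls =>
      by_cases hf : (ETree.node l a r).hasFls
      · have := esz_subst_gt_F hf G H
        rw [heq, esubst_fls] at this
        omega
      · exact absurd heq (hJ (ETree.node l a r) ETree.fls hf (by simp))
    | node l' b r' =>
      rw [esubst_node, esubst_node] at heq
      injection heq with h1 h2 h3
      rw [ihl l' h1, ihr r' h3, h2]

/-! ### Reachable continuation pairs -/

inductive Reach (S : ETree A) : ETree A → ETree A → Prop
  | base : Reach S S ETree.fls
  | stepG (G H S₁ : ETree A) : Reach S G H → ST S₁ → Reach S (S₁.subst G H) H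
  | stepH (G H S₁ : ETree A) : Reach S G H → ST S₁ → Reach S G (S₁.subst G H)

theorem Reach.props {S G H : ETree A} (hS : ST S) (h : Reach S G H) :
    G.hasTru ∧ G.hasFls ∧ H.hasFls ∧ S.depth ≤ G.depth ∧
      (H = ETree.fls ∨ (H.hasTru ∧ S.depth + 1 ≤ H.depth)) := by
  induction h with
  | base => exact ⟨hS.props.1, hS.props.2.1, by simp, le_refl _, Or.inl rfl⟩
  | stepG G H S₁ hR hS₁ ih =>
    obtain ⟨hGt, hGf, hHf, hdG, halt⟩ := ih
    exact ⟨(hasTru_subst S₁ G H).mpr (Or.inl ⟨hS₁.props.1, hGt⟩),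
      (hasFls_subst S₁ G H).mpr (Or.inl ⟨hS₁.props.1, hGf⟩), hHf,
      le_trans hdG (depth_subst_ge_T hS₁.props.1 G H), halt⟩
  | stepH G H S₁ hR hS₁ ih =>
    obtain ⟨hGt, hGf, hHf, hdG, halt⟩ := ih
    refine ⟨hGt, hGf, (hasFls_subst S₁ G H).mpr (Or.inl ⟨hS₁.props.1, hGf⟩), hdG,
      Or.inr ⟨(hasTru_subst S₁ G H).mpr (Or.inl ⟨hS₁.props.1, hGt⟩), ?_⟩⟩
    obtain ⟨l, a, r, he⟩ := hS₁.props.2.2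
    have := depth_subst_gt_T (he ▸ hS₁.props.1) G H
    rw [← he] at this
    omega

theorem Reach.invG {S G H : ETree A} (h : Reach S G H) :
    G = S ∨ ∃ S₁ G' H', ST S₁ ∧ Reach S G' H' ∧ G = S₁.subst G' H' := by
  induction h with
  | base => exact Or.inl rfl
  | stepG G H S₁ hR hS₁ ih => exact Or.inr ⟨S₁, G, H, hS₁, hR, rfl⟩
  | stepH G H S₁ hR hS₁ ih => exact ih

theorem Reach.invH {S G H : ETree A} (h : Reach S G H) :
    H = ETree.fls ∨ ∃ S₁ G' H', ST S₁ ∧ Reach S G' H' ∧ H = S₁.subst G' H' := by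
  induction h with
  | base => exact Or.inl rfl
  | stepG G H S₁ hR hS₁ ih => exact ih
  | stepH G H S₁ hR hS₁ ih => exact Or.inr ⟨S₁, G, H, hS₁, hR, rfl⟩

theorem Reach.J {S G H : ETree A} (hS : ST S) (h : Reach S G H) : J G H := by
  induction h with
  | base =>
    intro C K hC hK
    exact Jbase hS.props.1 C K hC hK
  | stepG G H S₁ hR hS₁ ih =>
    intro C K hC hK heq
    have e : ∀ T : ETree A, T.subst (S₁.subst G H) H = (T.subst S₁ ETree.fls).subst G H := by
      intro T; rw [subst_assoc, esubst_fls]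
    rw [e C, e K] at heq
    obtain ⟨hGt, _, hHf, _, _⟩ := hR.props hS
    have := INJ hGt ih _ _ heq
    exact Jbase hS₁.props.1 C K hC hK this
  | stepH G H S₁ hR hS₁ ih =>
    intro C K hC hK heq
    have e : ∀ T : ETree A, T.subst G (S₁.subst G H) = (T.subst ETree.tru S₁).subst G H := by
      intro T; rw [subst_assoc, esubst_tru]
    rw [e C, e K] at heq
    refine ih (C.subst ETree.tru S₁) (K.subst ETree.tru S₁) ?_ ?_ heq
    · rw [hasFls_subst]
      rintro (⟨-, h⟩ | ⟨h, -⟩)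
      · simp at h
      · exact hC h
    · rw [hasFls_subst]
      exact Or.inr ⟨hK, hS₁.props.2.1⟩

/-! ### Local cut analysis -/

theorem claimL {G : ETree A} (hGf : G.hasFls) :
    ∀ U : ETree A, ¬U.hasFls → ∀ (Y : ETreeB A) (Z : ETree A),
      Cut (U.subst G ETree.fls) Y Z → ¬Y.hasFls →
      (∃ C : ETree A, ¬C.hasFls ∧ Z = C.subst G ETree.fls) ∨ NFC G Z := by
  intro U
  induction U with
  | tru =>
    intro hU Y Z hc hY
    by_cases hb : Y = ETreeB.box
    · subst hb
      refine Or.inl ⟨ETree.tru, by simp, ?_⟩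
      have h0 := hc.1
      rw [esubst_tru, bsub_box] at h0
      rw [esubst_tru]
      exact h0.symm
    · refine Or.inr ⟨Y, ?_, hc.2.1, hb, hY⟩
      have h0 := hc.1
      rwa [esubst_tru] at h0
  | fls => intro hU; simp at hU
  | node l a r ihl ihr =>
    intro hU Y Z hc hY
    have hU2 : ¬l.hasFls ∧ ¬r.hasFls := by simpa [not_or] using hU
    cases Y with
    | box =>
      refine Or.inl ⟨ETree.node l a r, hU, ?_⟩
      have h0 := hc.1; rw [bsub_box] at h0; exact h0.symm
    | tru => exact absurd hc.2.1 (by simp)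
    | fls => exact absurd hc.2.1 (by simp)
    | node Yl c Yr =>
      have h0 := hc.1
      rw [esubst_node, bsub_node] at h0
      injection h0 with h1 h2 h3
      have hYlf : ¬Yl.hasFls := fun h => hY (Or.inl h)
      have hbl : Yl.hasBox := by
        have hfl : (l.subst G ETree.fls).hasFls :=
          (hasFls_subst l G ETree.fls).mpr (Or.inl ⟨Or.resolve_right (hasTru_or_hasFls l) hU2.1, hGf⟩)
        rw [h1, hasFls_substBox] at hfl
        rcases hfl with h | h
        · exact absurd h hYlf
        · exact h.1
      exact ihl hU2.1 Yl Z ⟨h1, hbl, hc.2.2.1, hc.2.2.2⟩ hYlf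

theorem claimR {H : ETree A} (hHf : H.hasFls) :
    ∀ V : ETree A, ¬V.hasTru → ∀ (Y : ETreeB A) (Z : ETree A),
      Cut (V.subst ETree.tru H) Y Z → ¬Y.hasFls →
      (∃ D : ETree A, ¬D.hasTru ∧ Z = D.subst ETree.tru H) ∨ NFC H Z := by
  intro V
  induction V with
  | fls =>
    intro hV Y Z hc hY
    by_cases hb : Y = ETreeB.box
    · subst hb
      refine Or.inl ⟨ETree.fls, by simp, ?_⟩
      have h0 := hc.1
      rw [esubst_fls, bsub_box] at h0
      rw [esubst_fls]
      exact h0.symm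
    · refine Or.inr ⟨Y, ?_, hc.2.1, hb, hY⟩
      have h0 := hc.1
      rwa [esubst_fls] at h0
  | tru => intro hV; simp at hV
  | node l a r ihl ihr =>
    intro hV Y Z hc hY
    have hV2 : ¬l.hasTru ∧ ¬r.hasTru := by simpa [not_or] using hV
    cases Y with
    | box =>
      refine Or.inl ⟨ETree.node l a r, hV, ?_⟩
      have h0 := hc.1; rw [bsub_box] at h0; exact h0.symm
    | tru => exact absurd hc.2.1 (by simp)
    | fls => exact absurd hc.2.1 (by simp)
    | node Yl c Yr =>
      have h0 := hc.1
      rw [esubst_node, bsub_node] at h0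
      injection h0 with h1 h2 h3
      have hYlf : ¬Yl.hasFls := fun h => hY (Or.inl h)
      have hbl : Yl.hasBox := by
        have hfl : (l.subst ETree.tru H).hasFls :=
          (hasFls_subst l ETree.tru H).mpr (Or.inr ⟨Or.resolve_left (hasTru_or_hasFls l) hV2.1, hHf⟩)
        rw [h1, hasFls_substBox] at hfl
        rcases hfl with h | h
        · exact absurd h hYlf
        · exact h.1
      exact ihl hV2.1 Yl Z ⟨h1, hbl, hc.2.2.1, hc.2.2.2⟩ hYlf

end SclAux

namespace SclAux

variable {A : Type}

/-! ### Resolution of a nontrivial F-avoiding cut at an ℓ-node -/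

theorem resolveF {S G H Z : ETree A} (hS : ST S) (hR : Reach S G H)
    (hZt : Z.hasTru) (hZf : Z.hasFls)
    (hTG : ∀ S₁ G' H', ST S₁ → Reach S G' H' → G = S₁.subst G' H' → TrivF G)
    (hTH : ∀ S₁ G' H', ST S₁ → Reach S G' H' → H = S₁.subst G' H' → TrivF H)
    (hcl : (∃ C : ETree A, ¬C.hasFls ∧ Z = C.subst G ETree.fls) ∨ NFC G Z)
    (hcr : (∃ D : ETree A, ¬D.hasTru ∧ Z = D.subst ETree.tru H) ∨ NFC H Z) : False := by
  obtain ⟨hGt, hGf, hHf, hdG, halt⟩ := hR.props hS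
  rcases hcr with ⟨D, hD, hZD⟩ | hnfcH
  · rcases hcl with ⟨C, hC, hZC⟩ | hnfcG
    · have e1 : C.subst G H = Z := (subst_congr_noFls hC G H ETree.fls).trans hZC.symm
      have e2 : D.subst G H = Z := (subst_congr_noTru hD G ETree.tru H).trans hZD.symm
      exact hR.J hS C D hC (Or.resolve_left (hasTru_or_hasFls D) hD) (e1.trans e2.symm)
    · rcases hR.invG with hGS | ⟨S₁, G', H', hS₁, hR', hGc⟩
      · have hdZ : Z.depth < G.depth := hnfcG.depth_lt
        rcases halt with hHfls | ⟨hHt, hdH⟩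
        · rw [hHfls] at hZD
          have h5 : Z.hasTru := hZt
          rw [hZD, hasTru_subst] at h5
          simp at h5
          exact hD h5
        · have h5 : H.depth ≤ Z.depth := by
            rw [hZD]
            exact depth_subst_ge_F (Or.resolve_left (hasTru_or_hasFls D) hD) ETree.tru H
          rw [hGS] at hdZ
          omega
      · obtain ⟨Yg, hYg1, hYg2, hYg3, hYg4⟩ := hnfcG
        exact hYg3 (hTG S₁ G' H' hS₁ hR' hGc Yg Z ⟨hYg1, hYg2, hZt, hZf⟩ hYg4)
  · rcases hR.invH with hHfls | ⟨S₁, G', H', hS₁, hR', hHc⟩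
    · obtain ⟨Yg, hYg1, hYg2, hYg3, hYg4⟩ := hnfcH
      rw [hHfls] at hYg1
      cases Yg with
      | box => exact hYg3 rfl
      | tru => simp at hYg2
      | fls => simp at hYg2
      | node l c r => rw [bsub_node] at hYg1; exact absurd hYg1 (by simp)
    · obtain ⟨Yg, hYg1, hYg2, hYg3, hYg4⟩ := hnfcH
      exact hYg3 (hTH S₁ G' H' hS₁ hR' hHc Yg Z ⟨hYg1, hYg2, hZt, hZf⟩ hYg4)

/-! ### Main lemma: composed trees have no nontrivial F-avoiding cut -/

theorem mainF : ∀ n : Nat, ∀ S X₀ : ETree A, ST S → ST X₀ → ∀ G H : ETree A,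
    Reach S G H → esz (X₀.subst G H) ≤ n → TrivF (X₀.subst G H) := by
  intro n
  induction n using Nat.strong_induction_on with
  | _ n IHn =>
    intro S X₀ hS hX₀
    induction hX₀ with
    | ell X hL =>
      intro G H hR hsz Y Z hc hY
      obtain ⟨hGt, hGf, hHf, -, -⟩ := hR.props hS
      cases hL with
      | pos U V a hU hV =>
        have hXeq : (ETree.node U a V).subst G H
            = ETree.node (U.subst G ETree.fls) a (V.subst ETree.tru H) := by
          rw [esubst_node, subst_congr_noFls hU G H ETree.fls, subst_congr_noTru hV G ETree.tru H]
        cases Y with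
        | box => rfl
        | tru => exact absurd hc.2.1 (by simp)
        | fls => exact absurd hc.2.1 (by simp)
        | node Yl c Yr =>
          exfalso
          have h0 := hc.1
          rw [hXeq, bsub_node] at h0
          injection h0 with h1 h2 h3
          have hYlf : ¬Yl.hasFls := fun h => hY (Or.inl h)
          have hYrf : ¬Yr.hasFls := fun h => hY (Or.inr h)
          have hbl : Yl.hasBox := by
            have hfl : (U.subst G ETree.fls).hasFls :=
              (hasFls_subst U G ETree.fls).mpr
                (Or.inl ⟨Or.resolve_right (hasTru_or_hasFls U) hU, hGf⟩)
            rw [h1, hasFls_substBox] at hfl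
            rcases hfl with h | h
            · exact absurd h hYlf
            · exact h.1
          have hbr : Yr.hasBox := by
            have hfr : (V.subst ETree.tru H).hasFls :=
              (hasFls_subst V ETree.tru H).mpr
                (Or.inr ⟨Or.resolve_left (hasTru_or_hasFls V) hV, hHf⟩)
            rw [h3, hasFls_substBox] at hfr
            rcases hfr with h | h
            · exact absurd h hYrf
            · exact h.1
          have hcl := claimL hGf U hU Yl Z ⟨h1, hbl, hc.2.2.1, hc.2.2.2⟩ hYlf
          have hcr := claimR hHf V hV Yr Z ⟨h3, hbr, hc.2.2.1, hc.2.2.2⟩ hYrf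
          refine resolveF hS hR hc.2.2.1 hc.2.2.2 ?_ ?_ hcl hcr
          · intro S₁ G' H' hS₁ hR' hGc
            have hszG : esz G < esz ((ETree.node U a V).subst G H) :=
              esz_subst_gt_T (Or.inl (Or.resolve_right (hasTru_or_hasFls U) hU)) G H
            rw [hGc]
            exact IHn (esz G) (by omega) S S₁ hS hS₁ G' H' hR'
              (le_of_eq (congrArg esz hGc.symm))
          · intro S₁ G' H' hS₁ hR' hHc
            have hszH : esz H < esz ((ETree.node U a V).subst G H) :=
              esz_subst_gt_F (Or.inr (Or.resolve_left (hasTru_or_hasFls V) hV)) G H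
            rw [hHc]
            exact IHn (esz H) (by omega) S S₁ hS hS₁ G' H' hR'
              (le_of_eq (congrArg esz hHc.symm))
      | neg U V a hU hV =>
        have hXeq : (ETree.node V a U).subst G H
            = ETree.node (V.subst ETree.tru H) a (U.subst G ETree.fls) := by
          rw [esubst_node, subst_congr_noFls hU G H ETree.fls, subst_congr_noTru hV G ETree.tru H]
        cases Y with
        | box => rfl
        | tru => exact absurd hc.2.1 (by simp)
        | fls => exact absurd hc.2.1 (by simp)
        | node Yl c Yr =>
          exfalso
          have h0 := hc.1
          rw [hXeq, bsub_node] at h0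
          injection h0 with h1 h2 h3
          have hYlf : ¬Yl.hasFls := fun h => hY (Or.inl h)
          have hYrf : ¬Yr.hasFls := fun h => hY (Or.inr h)
          have hbl : Yl.hasBox := by
            have hfl : (V.subst ETree.tru H).hasFls :=
              (hasFls_subst V ETree.tru H).mpr
                (Or.inr ⟨Or.resolve_left (hasTru_or_hasFls V) hV, hHf⟩)
            rw [h1, hasFls_substBox] at hfl
            rcases hfl with h | h
            · exact absurd h hYlf
            · exact h.1
          have hbr : Yr.hasBox := by
            have hfr : (U.subst G ETree.fls).hasFls :=
              (hasFls_subst U G ETree.fls).mpr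
                (Or.inl ⟨Or.resolve_right (hasTru_or_hasFls U) hU, hGf⟩)
            rw [h3, hasFls_substBox] at hfr
            rcases hfr with h | h
            · exact absurd h hYrf
            · exact h.1
          have hcl := claimL hGf U hU Yr Z ⟨h3, hbr, hc.2.2.1, hc.2.2.2⟩ hYrf
          have hcr := claimR hHf V hV Yl Z ⟨h1, hbl, hc.2.2.1, hc.2.2.2⟩ hYlf
          refine resolveF hS hR hc.2.2.1 hc.2.2.2 ?_ ?_ hcl hcr
          · intro S₁ G' H' hS₁ hR' hGc
            have hszG : esz G < esz ((ETree.node V a U).subst G H) :=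
              esz_subst_gt_T (Or.inr (Or.resolve_right (hasTru_or_hasFls U) hU)) G H
            rw [hGc]
            exact IHn (esz G) (by omega) S S₁ hS hS₁ G' H' hR'
              (le_of_eq (congrArg esz hGc.symm))
          · intro S₁ G' H' hS₁ hR' hHc
            have hszH : esz H < esz ((ETree.node V a U).subst G H) :=
              esz_subst_gt_F (Or.inl (Or.resolve_left (hasTru_or_hasFls V) hV)) G H
            rw [hHc]
            exact IHn (esz H) (by omega) S S₁ hS hS₁ G' H' hR'
              (le_of_eq (congrArg esz hHc.symm))
    | and X S₂ hX hS₂ ihX ihS₂ =>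
      intro G H hR hsz
      have he : (X.subst S₂ ETree.fls).subst G H = X.subst (S₂.subst G H) H := by
        rw [subst_assoc, esubst_fls]
      rw [he] at hsz ⊢
      exact ihX (S₂.subst G H) H (Reach.stepG G H S₂ hR hS₂) hsz
    | or X S₂ hX hS₂ ihX ihS₂ =>
      intro G H hR hsz
      have he : (X.subst ETree.tru S₂).subst G H = X.subst G (S₂.subst G H) := by
        rw [subst_assoc, esubst_tru]
      rw [he] at hsz ⊢
      exact ihX G (S₂.subst G H) (Reach.stepH G H S₂ hR hS₂) hsz

theorem trivF_comp {X S : ETree A} (hX : ST X) (hS : ST S) : TrivF (X.subst S ETree.fls) :=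
  mainF (esz (X.subst S ETree.fls)) S X hS hX S ETree.fls Reach.base (le_refl _)

/-! ### The minimal-depth disjunction decomposition -/

theorem ddMin {W : ETree A} (hWt : W.hasTru) (hWf : W.hasFls) (hWr : TrivF W) :
    ∀ (C : ETree A) (Y : ETreeB A) (Z : ETree A), Cut (C.subst ETree.tru W) Y Z → ¬Y.hasFls →
      W.depth ≤ Z.depth ∧ (Z.depth ≤ W.depth → Y = C.flsToBox ∧ Z = W) := by
  intro C
  induction C with
  | tru =>
    intro Y Z hc hY
    exfalso
    have h0 := hc.1
    rw [esubst_tru] at h0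
    cases Y with
    | box =>
      rw [bsub_box] at h0
      have h5 := hc.2.2.2
      rw [← h0] at h5
      simp at h5
    | tru => exact absurd hc.2.1 (by simp)
    | fls => rw [bsub_fls] at h0; exact absurd h0 (by simp)
    | node l c r => rw [bsub_node] at h0; exact absurd h0 (by simp)
  | fls =>
    intro Y Z hc hY
    have hc' : Cut W Y Z := by
      have h0 := hc.1; rw [esubst_fls] at h0; exact ⟨h0, hc.2⟩
    by_cases hb : Y = ETreeB.box
    · subst hb
      have h0 := hc'.1; rw [bsub_box] at h0
      exact ⟨le_of_eq (congrArg ETree.depth h0), fun _ => ⟨rfl, h0.symm⟩⟩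
    · exact absurd (hWr Y Z hc' hY) hb
  | node l a r ihl ihr =>
    intro Y Z hc hY
    cases Y with
    | tru => exact absurd hc.2.1 (by simp)
    | fls => exact absurd hc.2.1 (by simp)
    | box =>
      have h0 := hc.1; rw [bsub_box] at h0
      have hfC : l.hasFls ∨ r.hasFls := by
        have h5 := hc.2.2.2
        rw [← h0, hasFls_subst] at h5
        exact (by simpa using h5 : (l.hasFls ∨ r.hasFls) ∧ W.hasFls).1
      have hlt : W.depth < Z.depth := by
        rw [← h0]
        rcases hfC with h | h
        · have := depth_subst_ge_F h ETree.tru W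
          simp only [esubst_node, edepth_node]
          omega
        · have := depth_subst_ge_F h ETree.tru W
          simp only [esubst_node, edepth_node]
          omega
      exact ⟨le_of_lt hlt, fun hle => absurd hle (by omega)⟩
    | node Yl c Yr =>
      have h0 := hc.1
      rw [esubst_node, bsub_node] at h0
      injection h0 with h1 h2 h3
      subst h2
      have hYlf : ¬Yl.hasFls := fun h => hY (Or.inl h)
      have hYrf : ¬Yr.hasFls := fun h => hY (Or.inr h)
      have hbox : Yl.hasBox ∨ Yr.hasBox := hc.2.1
      by_cases hbl : Yl.hasBox
      · have Pl := ihl Yl Z ⟨h1, hbl, hc.2.2.1, hc.2.2.2⟩ hYlf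
        refine ⟨Pl.1, fun hle => ?_⟩
        obtain ⟨hYl, hZW⟩ := Pl.2 hle
        by_cases hbr : Yr.hasBox
        · have Pr := ihr Yr Z ⟨h3, hbr, hc.2.2.1, hc.2.2.2⟩ hYrf
          obtain ⟨hYr, -⟩ := Pr.2 hle
          exact ⟨by rw [flsToBox_node, hYl, hYr], hZW⟩
        · have hfr : ¬(r.subst ETree.tru W).hasFls := by
            rw [h3, hasFls_substBox]
            rintro (h | ⟨h, -⟩)
            · exact hYrf h
            · exact hbr h
          have hrf : ¬r.hasFls := fun h =>
            hfr ((hasFls_subst r ETree.tru W).mpr (Or.inr ⟨h, hWf⟩))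
          have hre : r.subst ETree.tru W = r := subst_id_noFls hrf W
          have h3' : Yr.substBox Z = r := by rw [← h3, hre]
          have hYr : Yr = r.flsToBox := noBox_flsToBox hbr hYrf h3'
          exact ⟨by rw [flsToBox_node, hYl, hYr], hZW⟩
      · have hbr : Yr.hasBox := hbox.resolve_left hbl
        have Pr := ihr Yr Z ⟨h3, hbr, hc.2.2.1, hc.2.2.2⟩ hYrf
        refine ⟨Pr.1, fun hle => ?_⟩
        obtain ⟨hYr, hZW⟩ := Pr.2 hle
        have hfl : ¬(l.subst ETree.tru W).hasFls := by
          rw [h1, hasFls_substBox]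
          rintro (h | ⟨h, -⟩)
          · exact hYlf h
          · exact hbl h
        have hlf : ¬l.hasFls := fun h =>
          hfl ((hasFls_subst l ETree.tru W).mpr (Or.inr ⟨h, hWf⟩))
        have hle2 : l.subst ETree.tru W = l := subst_id_noFls hlf W
        have h1' : Yl.substBox Z = l := by rw [← h1, hle2]
        have hYl : Yl = l.flsToBox := noBox_flsToBox hbl hYlf h1'
        exact ⟨by rw [flsToBox_node, hYl, hYr], hZW⟩

/-! ### The minimal-depth conjunction decomposition, by mirroring -/

theorem cdMin {W : ETree A} (hWt : W.hasTru) (hWf : W.hasFls) (hWr : TrivT W) :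
    ∀ (C : ETree A) (Y : ETreeB A) (Z : ETree A), Cut (C.subst W ETree.fls) Y Z → ¬Y.hasTru →
      W.depth ≤ Z.depth ∧ (Z.depth ≤ W.depth → Y = C.truToBox ∧ Z = W) := by
  intro C Y Z hc hY
  have hWr' : TrivF (mir W) := by
    intro Y' Z' hc' hY'
    have h1 : Cut W (mirB Y') (mir Z') := by
      have := hc'.mir
      rwa [mir_mir] at this
    have := hWr (mirB Y') (mir Z') h1 (by rw [hasTru_mirB]; exact hY')
    rwa [mirB_eq_box] at this
  have hc' : Cut ((mir C).subst ETree.tru (mir W)) (mirB Y) (mir Z) := by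
    have := hc.mir
    rwa [mir_subst, mir_fls] at this
  have h := ddMin (by rw [hasTru_mir]; exact hWf) (by rw [hasFls_mir]; exact hWt) hWr'
    (mir C) (mirB Y) (mir Z) hc' (by rw [hasFls_mirB]; exact hY)
  constructor
  · have h5 := h.1
    rwa [depth_mir, depth_mir] at h5
  · intro hle
    have h2 := h.2 (by rw [depth_mir, depth_mir]; exact hle)
    constructor
    · have h3 := h2.1
      rw [← mirB_truToBox] at h3
      have h4 := congrArg mirB h3
      rwa [mirB_mirB, mirB_mirB] at h4
    · have h4 := congrArg mir h2.2
      rwa [mir_mir, mir_mir] at h4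

end SclAux

namespace SclAux

variable {A : Type}

/-! ### Evaluation trees of SNF terms -/

@[simp] theorem se_tru : se (STerm.tru : STerm A) = ETree.tru := rfl
@[simp] theorem se_fls : se (STerm.fls : STerm A) = ETree.fls := rfl
@[simp] theorem se_atom (a : A) : se (STerm.atom a) = ETree.node ETree.tru a ETree.fls := rfl
@[simp] theorem se_neg (p : STerm A) : se (STerm.neg p) = (se p).subst ETree.fls ETree.tru := rfl
@[simp] theorem se_and (p q : STerm A) : se (STerm.and p q) = (se p).subst (se q) ETree.fls := rfl
@[simp] theorem se_or (p q : STerm A) : se (STerm.or p q) = (se p).subst ETree.tru (se q) := rfl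

theorem seT_noFls {p : STerm A} (h : IsST_T p) : ¬(se p).hasFls := by
  induction h with
  | tru => simp
  | or a hp hq ihp ihq =>
    simp only [se_or, se_and, se_atom, esubst_node, esubst_tru, esubst_fls, ehasFls_node, not_or]
    constructor
    · rw [hasFls_subst]
      rintro (⟨-, h⟩ | ⟨h, -⟩)
      · simp at h
      · exact ihp h
    · exact ihq

theorem seF_noTru {p : STerm A} (h : IsST_F p) : ¬(se p).hasTru := by
  induction h with
  | fls => simp
  | and a hp hq ihp ihq =>
    simp only [se_and, se_or, se_atom, esubst_node, esubst_tru, esubst_fls, ehasTru_node, not_or]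
    constructor
    · exact ihq
    · rw [hasTru_subst]
      rintro (⟨h, -⟩ | ⟨-, h⟩)
      · exact ihp h
      · simp at h

theorem seL_LT {p : STerm A} (h : IsST_L p) : LT (se p) := by
  cases h with
  | pos a hp hq =>
    rename_i p q
    have he : se (STerm.or (STerm.and (STerm.atom a) p) q) = ETree.node (se p) a (se q) := by
      simp only [se_or, se_and, se_atom, esubst_node, esubst_tru, esubst_fls]
      rw [subst_id_noFls (seT_noFls hp)]
    rw [he]
    exact LT.pos (se p) (se q) a (seT_noFls hp) (seF_noTru hq)
  | neg a hp hq =>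
    rename_i p q
    have he : se (STerm.or (STerm.and (STerm.neg (STerm.atom a)) p) q)
        = ETree.node (se q) a (se p) := by
      simp only [se_or, se_and, se_neg, se_atom, esubst_node, esubst_tru, esubst_fls]
      rw [subst_id_noFls (seT_noFls hp)]
    rw [he]
    exact LT.neg (se p) (se q) a (seT_noFls hp) (seF_noTru hq)

def tsz : STerm A → Nat
  | STerm.atom _ => 1
  | STerm.tru => 1
  | STerm.fls => 1
  | STerm.neg p => tsz p + 1
  | STerm.and p q => tsz p + tsz q + 1
  | STerm.or p q => tsz p + tsz q + 1

theorem tsz_pos (p : STerm A) : 1 ≤ tsz p := by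
  cases p <;> simp [tsz]

theorem se_ST : ∀ n : Nat, ∀ p : STerm A, tsz p ≤ n →
    (IsST_C p → ST (se p)) ∧ (IsST_D p → ST (se p)) ∧ (IsST_Star p → ST (se p)) := by
  intro n
  induction n with
  | zero =>
    intro p hp
    have := tsz_pos p
    omega
  | succ n ih =>
    intro p hp
    have hC : IsST_C p → ST (se p) := by
      intro h
      cases h with
      | ell hl => exact ST.ell _ (seL_LT hl)
      | @and p₁ q₁ hs hd =>
        have h1 := tsz_pos q₁
        have h2 := tsz_pos p₁
        simp only [tsz] at hp
        exact ST.and _ _ ((ih p₁ (by omega)).2.2 hs) ((ih q₁ (by omega)).2.1 hd)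
    have hD : IsST_D p → ST (se p) := by
      intro h
      cases h with
      | ell hl => exact ST.ell _ (seL_LT hl)
      | @or p₁ q₁ hs hc =>
        have h1 := tsz_pos q₁
        have h2 := tsz_pos p₁
        simp only [tsz] at hp
        exact ST.or _ _ ((ih p₁ (by omega)).2.2 hs) ((ih q₁ (by omega)).1 hc)
    refine ⟨hC, hD, fun h => ?_⟩
    cases h with
    | c hc => exact hC hc
    | d hd => exact hD hd

theorem seStar_ST {p : STerm A} (h : IsST_Star p) : ST (se p) :=
  (se_ST (tsz p) p (le_refl _)).2.2 h

theorem trivF_seC {q : STerm A} (h : IsST_C q) : TrivF (se q) := by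
  cases h with
  | ell hl => exact trivF_of_LT (seL_LT hl)
  | @and p₁ q₁ hs hd =>
    exact trivF_comp (seStar_ST hs) (seStar_ST (IsST_Star.d hd))

theorem trivT_seD {q : STerm A} (h : IsST_D q) : TrivT (se q) := by
  cases h with
  | ell hl =>
    exact TrivT_of_mir (trivF_of_LT (seL_LT hl).mir)
  | @or p₁ q₁ hs hc =>
    apply TrivT_of_mir
    have he : SclAux.mir (se (STerm.or p₁ q₁))
        = (SclAux.mir (se p₁)).subst (SclAux.mir (se q₁)) ETree.fls := by
      rw [se_or, mir_subst, mir_tru]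
    rw [he]
    exact trivF_comp (seStar_ST hs).mir (seStar_ST (IsST_Star.c hc)).mir

end SclAux

/-- conjunction/disjunction decomposition theorem (SCL). -/
theorem scl_cd_dd_theorem (A : Type) [Countable A] :
    (∀ (P Q : STerm A), IsST_Star P → IsST_D Q →
      IsCdS (se (STerm.and P Q)) (se P).truToBox (se Q) ∧
      (∀ (Y : ETreeB A) (Z : ETree A),
        IsCdS (se (STerm.and P Q)) Y Z → Y = (se P).truToBox ∧ Z = se Q) ∧
      (∀ (Y : ETreeB A) (Z : ETree A), ¬ IsDdS (se (STerm.and P Q)) Y Z)) ∧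
    (∀ (P Q : STerm A), IsST_Star P → IsST_C Q →
      (∀ (Y : ETreeB A) (Z : ETree A), ¬ IsCdS (se (STerm.or P Q)) Y Z) ∧
      IsDdS (se (STerm.or P Q)) (se P).flsToBox (se Q) ∧
      (∀ (Y : ETreeB A) (Z : ETree A),
        IsDdS (se (STerm.or P Q)) Y Z → Y = (se P).flsToBox ∧ Z = se Q)) := by
  
  constructor
  · intro P Q hP hQ
    have hPS : SclAux.ST (se P) := SclAux.seStar_ST hP
    have hQS : SclAux.ST (se Q) := SclAux.seStar_ST (IsST_Star.d hQ)
    have hWt : (se Q).hasTru := hQS.props.1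
    have hWf : (se Q).hasFls := hQS.props.2.1
    have hWr : SclAux.TrivT (se Q) := SclAux.trivT_seD hQ
    have hmin := SclAux.cdMin hWt hWf hWr (se P)
    have hXeq : se (STerm.and P Q) = ((se P).truToBox).substBox (se Q) := by
      rw [SclAux.truToBox_substBox]
      exact SclAux.se_and P Q
    have hccd : IsCcdS (se (STerm.and P Q)) (se P).truToBox (se Q) :=
      ⟨hXeq, (SclAux.hasBox_truToBox (se P)).mpr hPS.props.1,
       (SclAux.hasFls_truToBox (se P)).mpr hPS.props.2.1,
       SclAux.not_hasTru_truToBox (se P), hWt, hWf⟩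
    have hcut : ∀ (Y : ETreeB A) (Z : ETree A), IsCcdS (se (STerm.and P Q)) Y Z →
        SclAux.Cut ((se P).subst (se Q) ETree.fls) Y Z ∧ ¬Y.hasTru := by
      intro Y Z hc
      refine ⟨⟨?_, hc.2.1, hc.2.2.2.2.1, hc.2.2.2.2.2⟩, hc.2.2.2.1⟩
      rw [← SclAux.se_and]
      exact hc.1
    refine ⟨⟨hccd, ?_⟩, ?_, ?_⟩
    · intro Y' Z' hc'
      obtain ⟨hcut', hnt⟩ := hcut Y' Z' hc'
      exact (hmin Y' Z' hcut' hnt).1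
    · intro Y Z hcd
      obtain ⟨hcc, hm⟩ := hcd
      obtain ⟨hcut', hnt⟩ := hcut Y Z hcc
      exact (hmin Y Z hcut' hnt).2 (hm _ _ hccd)
    · intro Y Z hdd
      obtain ⟨hcdd, -⟩ := hdd
      have hbx : Y = ETreeB.box := by
        refine SclAux.trivF_comp hPS hQS Y Z ⟨?_, hcdd.2.1, hcdd.2.2.2.2.1, hcdd.2.2.2.2.2⟩
          hcdd.2.2.2.1
        rw [← SclAux.se_and]
        exact hcdd.1
      rw [hbx] at hcdd
      simpa using hcdd.2.2.1
  · intro P Q hP hQ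
    have hPS : SclAux.ST (se P) := SclAux.seStar_ST hP
    have hQS : SclAux.ST (se Q) := SclAux.seStar_ST (IsST_Star.c hQ)
    have hWt : (se Q).hasTru := hQS.props.1
    have hWf : (se Q).hasFls := hQS.props.2.1
    have hWr : SclAux.TrivF (se Q) := SclAux.trivF_seC hQ
    have hmin := SclAux.ddMin hWt hWf hWr (se P)
    have hTT : SclAux.TrivT (se (STerm.or P Q)) := by
      apply SclAux.TrivT_of_mir
      have he : SclAux.mir (se (STerm.or P Q))
          = (SclAux.mir (se P)).subst (SclAux.mir (se Q)) ETree.fls := by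
        rw [SclAux.se_or, SclAux.mir_subst, SclAux.mir_tru]
      rw [he]
      exact SclAux.trivF_comp hPS.mir hQS.mir
    have hXeq : se (STerm.or P Q) = ((se P).flsToBox).substBox (se Q) := by
      rw [SclAux.flsToBox_substBox]
      exact SclAux.se_or P Q
    have hcdd : IsCddS (se (STerm.or P Q)) (se P).flsToBox (se Q) :=
      ⟨hXeq, (SclAux.hasBox_flsToBox (se P)).mpr hPS.props.2.1,
       (SclAux.hasTru_flsToBox (se P)).mpr hPS.props.1,
       SclAux.not_hasFls_flsToBox (se P), hWt, hWf⟩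
    have hcut : ∀ (Y : ETreeB A) (Z : ETree A), IsCddS (se (STerm.or P Q)) Y Z →
        SclAux.Cut ((se P).subst ETree.tru (se Q)) Y Z ∧ ¬Y.hasFls := by
      intro Y Z hc
      refine ⟨⟨?_, hc.2.1, hc.2.2.2.2.1, hc.2.2.2.2.2⟩, hc.2.2.2.1⟩
      rw [← SclAux.se_or]
      exact hc.1
    refine ⟨?_, ⟨hcdd, ?_⟩, ?_⟩
    · intro Y Z hcd
      obtain ⟨hcc, -⟩ := hcd
      have hbx : Y = ETreeB.box :=
        hTT Y Z ⟨hcc.1, hcc.2.1, hcc.2.2.2.2.1, hcc.2.2.2.2.2⟩ hcc.2.2.2.1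
      rw [hbx] at hcc
      simpa using hcc.2.2.1
    · intro Y' Z' hc'
      obtain ⟨hcut', hnf⟩ := hcut Y' Z' hc'
      exact (hmin Y' Z' hcut' hnf).1
    · intro Y Z hdd
      obtain ⟨hcc, hm⟩ := hdd
      obtain ⟨hcut', hnf⟩ := hcut Y Z hcc
      exact (hmin Y Z hcut' hnf).2 (hm _ _ hcdd)
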